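/- Consider the pseudo-Riemannian metric on R^{2k+l} with coordinates (x_1,...,x_k, y_1,...,y_l, xbar_1,...,xbar_k), given by g(∂x_i, ∂x_j) = -2ψ_{ij}(y), g(∂y_a, ∂y_b) = C_{ab}, g(∂x_i, ∂xbar_i) = 1, where ψ : R^l -> S^2(R^k) is smooth and C is a nondegenerate constant symmetric matrix. Then the Ricci operator rho satisfies rho(∂x_i) = C^{ac} δ^{jk} ψ_{ij/ac} ∂xbar_k (where ψ_{ij/ac} = ∂y_a ∂y_c ψ_{ij}), rho(∂y_a) = 0, rho(∂xbar_i) = 0; in particular rho^2 = 0. -/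

import Mathlib

noncomputable section

open Finset in
/-- Partial derivative in the `i`-th coordinate direction. -/
def pd {ι : Type*} [Fintype ι] [DecidableEq ι]
    (i : ι) (f : (ι → ℝ) → ℝ) (p : ι → ℝ) : ℝ :=
  fderiv ℝ f p (Pi.single i 1)

/-- Christoffel symbols of the second kind `Γ^k_{ij}` of the metric `g`
(with inverse metric `ginv`). -/
def christoffel {ι : Type*} [Fintype ι] [DecidableEq ι]
    (g ginv : (ι → ℝ) → Matrix ι ι ℝ) (k i j : ι) (p : ι → ℝ) : ℝ :=
  (1 / 2) * ∑ l, ginv p k l *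
    (pd i (fun q => g q j l) p + pd j (fun q => g q i l) p - pd l (fun q => g q i j) p)

/-- Components of the curvature operator of the Levi-Civita connection:
`R(∂_i,∂_j)∂_k = ∑_l (curvOp g ginv i j k l) ∂_l`. -/
def curvOp {ι : Type*} [Fintype ι] [DecidableEq ι]
    (g ginv : (ι → ℝ) → Matrix ι ι ℝ) (i j k l : ι) (p : ι → ℝ) : ℝ :=
  pd i (christoffel g ginv l j k) p - pd j (christoffel g ginv l i k) p
    + ∑ m, christoffel g ginv l i m p * christoffel g ginv m j k p
    - ∑ m, christoffel g ginv l j m p * christoffel g ginv m i k p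

/-- The curvature operator extended multilinearly to tangent vectors:
component `l` of `R(v,w)u`. -/
def curvVec {ι : Type*} [Fintype ι] [DecidableEq ι]
    (g ginv : (ι → ℝ) → Matrix ι ι ℝ) (p : ι → ℝ) (v w u : ι → ℝ) : ι → ℝ :=
  fun l => ∑ i, ∑ j, ∑ k, v i * w j * u k * curvOp g ginv i j k l p

/-- The polarized Jacobi operator `J(v,w)u = (1/2){R(u,v)w + R(u,w)v}`. -/
def jacobiVec {ι : Type*} [Fintype ι] [DecidableEq ι]
    (g ginv : (ι → ℝ) → Matrix ι ι ℝ) (p : ι → ℝ) (v w u : ι → ℝ) : ι → ℝ :=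
  fun l => (1 / 2) * (curvVec g ginv p u v w l + curvVec g ginv p u w v l)

/-- The Ricci tensor `Ric_{ij} = Tr (z ↦ R(z,∂_i)∂_j)`. -/
def ricci {ι : Type*} [Fintype ι] [DecidableEq ι]
    (g ginv : (ι → ℝ) → Matrix ι ι ℝ) (i j : ι) (p : ι → ℝ) : ℝ :=
  ∑ m, curvOp g ginv m i j m p

/-- The Ricci operator (Ricci tensor with one index raised by `g`), as a matrix:
`rho(∂_j) = ∑_i (ricciOp p) i j ∂_i`. -/
def ricciOp {ι : Type*} [Fintype ι] [DecidableEq ι]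
    (g ginv : (ι → ℝ) → Matrix ι ι ℝ) (p : ι → ℝ) : Matrix ι ι ℝ :=
  fun i j => ∑ m, ginv p i m * ricci g ginv m j p

/-- The (0,4) curvature tensor `R_{ijkl} = g(R(∂_i,∂_j)∂_k, ∂_l)`. -/
def curv4 {ι : Type*} [Fintype ι] [DecidableEq ι]
    (g ginv : (ι → ℝ) → Matrix ι ι ℝ) (i j k l : ι) (p : ι → ℝ) : ℝ :=
  ∑ m, curvOp g ginv i j k m p * g p m l

/-- The metric of Definition 1.1: coordinates `(x, y, x̄)` indexed by
`Fin k ⊕ (Fin l ⊕ Fin k)`, with `g(∂xᵢ,∂xⱼ) = -2ψᵢⱼ(y)`, `g(∂yₐ,∂y_b) = C_{ab}`,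
`g(∂xᵢ,∂x̄ᵢ) = 1`. -/
def gPsi (k l : ℕ) (ψ : (Fin l → ℝ) → Matrix (Fin k) (Fin k) ℝ)
    (C : Matrix (Fin l) (Fin l) ℝ) (p : (Fin k ⊕ (Fin l ⊕ Fin k)) → ℝ) :
    Matrix (Fin k ⊕ (Fin l ⊕ Fin k)) (Fin k ⊕ (Fin l ⊕ Fin k)) ℝ :=
  fun a b => match a, b with
    | .inl i, .inl j => -2 * ψ (fun c => p (.inr (.inl c))) i j
    | .inr (.inl a), .inr (.inl b) => C a b
    | .inl i, .inr (.inr j) => if i = j then 1 else 0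
    | .inr (.inr i), .inl j => if i = j then 1 else 0
    | _, _ => 0
section StmtNineAux

variable {k l : ℕ}

/-- The y-coordinate projection, as a continuous linear map. -/
def projY (k l : ℕ) : ((Fin k ⊕ (Fin l ⊕ Fin k)) → ℝ) →L[ℝ] (Fin l → ℝ) :=
  ContinuousLinearMap.pi (fun c => ContinuousLinearMap.proj (Sum.inr (Sum.inl c)))

lemma projY_def (q : (Fin k ⊕ (Fin l ⊕ Fin k)) → ℝ) :
    projY k l q = fun e => q (.inr (.inl e)) := rfl

lemma projY_single (d : Fin k ⊕ (Fin l ⊕ Fin k)) :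
    projY k l (Pi.single d 1) = match d with
      | .inr (.inl a) => Pi.single a 1
      | _ => (0 : Fin l → ℝ) := by
  funext c
  cases d with
  | inl i => simp [projY_def, Pi.single_apply]
  | inr d => cases d with
    | inl a => simp [projY_def, Pi.single_apply, Sum.inr.injEq, Sum.inl.injEq, eq_comm]
    | inr i => simp [projY_def, Pi.single_apply]

lemma pd_comp_projY (F : (Fin l → ℝ) → ℝ) (hF : Differentiable ℝ F)
    (d : Fin k ⊕ (Fin l ⊕ Fin k)) (p : (Fin k ⊕ (Fin l ⊕ Fin k)) → ℝ) :
    pd d (fun q => F (projY k l q)) p = match d with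
      | .inr (.inl a) => pd a F (projY k l p)
      | _ => 0 := by
  have h : fderiv ℝ (fun q => F (projY k l q)) p
      = (fderiv ℝ F (projY k l p)).comp (projY k l) := by
    rw [show (fun q => F (projY k l q)) = F ∘ (projY k l) from rfl]
    rw [fderiv_comp p (hF _) (projY k l).differentiableAt, (projY k l).fderiv]
  unfold pd
  rw [h]
  cases d with
  | inl i => simp [projY_single]
  | inr d => cases d with
    | inl a => simp [projY_single]
    | inr i => simp [projY_single]

lemma pd_const {ι : Type*} [Fintype ι] [DecidableEq ι] (c : ℝ) (d : ι) (p : ι → ℝ) :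
    pd d (fun _ => c) p = 0 := by
  simp [pd, fderiv_const]

lemma pd_neg {ι : Type*} [Fintype ι] [DecidableEq ι] (f : (ι → ℝ) → ℝ) (d : ι) (p : ι → ℝ) :
    pd d (fun y => -(f y)) p = -(pd d f p) := by
  simp [pd, fderiv_neg]

lemma pd_const_mul {ι : Type*} [Fintype ι] [DecidableEq ι] (c : ℝ) (f : (ι → ℝ) → ℝ)
    (hf : Differentiable ℝ f) (d : ι) (p : ι → ℝ) :
    pd d (fun y => c * f y) p = c * pd d f p := by
  simp [pd, fderiv_const_mul (hf p)]

lemma pd_sum {ι : Type*} [Fintype ι] [DecidableEq ι] {α : Type*} (s : Finset α)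
    (f : α → (ι → ℝ) → ℝ) (hf : ∀ x, Differentiable ℝ (f x)) (d : ι) (p : ι → ℝ) :
    pd d (fun y => ∑ x ∈ s, f x y) p = ∑ x ∈ s, pd d (f x) p := by
  simp [pd, fderiv_fun_sum (fun i _ => (hf i) p)]

end StmtNineAux
section StmtNineAux2

variable {k l : ℕ} (ψ : (Fin l → ℝ) → Matrix (Fin k) (Fin k) ℝ)
  (C Cinv : Matrix (Fin l) (Fin l) ℝ)

/-- Explicit inverse metric. -/
def GinvM (ψ : (Fin l → ℝ) → Matrix (Fin k) (Fin k) ℝ) (Cinv : Matrix (Fin l) (Fin l) ℝ)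
    (p : (Fin k ⊕ (Fin l ⊕ Fin k)) → ℝ) :
    Matrix (Fin k ⊕ (Fin l ⊕ Fin k)) (Fin k ⊕ (Fin l ⊕ Fin k)) ℝ :=
  fun a b => match a, b with
    | .inl i, .inr (.inr j) => if i = j then 1 else 0
    | .inr (.inl a), .inr (.inl b) => Cinv a b
    | .inr (.inr i), .inl j => if i = j then 1 else 0
    | .inr (.inr i), .inr (.inr j) => 2 * ψ (projY k l p) i j
    | _, _ => 0

/-- Explicit Christoffel symbols (as functions of the y-variables). -/
def ΓE (ψ : (Fin l → ℝ) → Matrix (Fin k) (Fin k) ℝ) (Cinv : Matrix (Fin l) (Fin l) ℝ) :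
    (Fin k ⊕ (Fin l ⊕ Fin k)) → (Fin k ⊕ (Fin l ⊕ Fin k)) → (Fin k ⊕ (Fin l ⊕ Fin k)) →
      (Fin l → ℝ) → ℝ
  | .inr (.inl b), .inl i, .inl j => fun y => ∑ a, Cinv b a * pd a (fun z => ψ z i j) y
  | .inr (.inr m), .inl i, .inr (.inl a) => fun y => -(pd a (fun z => ψ z i m) y)
  | .inr (.inr m), .inr (.inl a), .inl i => fun y => -(pd a (fun z => ψ z i m) y)
  | _, _, _ => fun _ => 0

lemma contDiff_pdψ (hψ : ∀ i j, ContDiff ℝ (⊤ : ℕ∞) (fun y => ψ y i j)) (a : Fin l) (i j : Fin k) :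
    ContDiff ℝ (⊤ : ℕ∞) (pd a (fun z => ψ z i j)) := by
  have : pd a (fun z => ψ z i j) = fun y => fderiv ℝ (fun z => ψ z i j) y (Pi.single a 1) := rfl
  rw [this]
  exact ((hψ i j).fderiv_right (le_refl _)).clm_apply contDiff_const

lemma contDiff_pdpdψ (hψ : ∀ i j, ContDiff ℝ (⊤ : ℕ∞) (fun y => ψ y i j)) (b a : Fin l) (i j : Fin k) :
    ContDiff ℝ (⊤ : ℕ∞) (pd b (pd a (fun z => ψ z i j))) := by
  have : pd b (pd a (fun z => ψ z i j))
      = fun y => fderiv ℝ (pd a (fun z => ψ z i j)) y (Pi.single b 1) := rfl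
  rw [this]
  exact (((contDiff_pdψ ψ hψ a i j).fderiv_right (le_refl _))).clm_apply contDiff_const

lemma contDiff_ΓE (hψ : ∀ i j, ContDiff ℝ (⊤ : ℕ∞) (fun y => ψ y i j)) (c i j : Fin k ⊕ (Fin l ⊕ Fin k)) :
    ContDiff ℝ (⊤ : ℕ∞) (ΓE ψ Cinv c i j) := by
  rcases c with c | c | c <;> rcases i with i | i | i <;> rcases j with j | j | j <;>
    simp only [ΓE] <;>
    first
      | exact contDiff_const
      | exact (ContDiff.neg (contDiff_pdψ ψ hψ _ _ _))
      | exact ContDiff.sum (fun e _ => (contDiff_const.mul (contDiff_pdψ ψ hψ _ _ _)))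

lemma pd_gPsi (hψ : ∀ i j, ContDiff ℝ (⊤ : ℕ∞) (fun y => ψ y i j)) (d i j : Fin k ⊕ (Fin l ⊕ Fin k)) (p : (Fin k ⊕ (Fin l ⊕ Fin k)) → ℝ) :
    pd d (fun q => gPsi k l ψ C q i j) p = match d, i, j with
      | .inr (.inl a), .inl i', .inl j' => -2 * pd a (fun z => ψ z i' j') (projY k l p)
      | _, _, _ => 0 := by
  rcases i with i | i | i <;> rcases j with j | j | j
  · -- X X case
    have he : (fun q => gPsi k l ψ C q (.inl i) (.inl j))
        = fun q => (fun y => -2 * ψ y i j) (projY k l q) := rfl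
    rw [he, pd_comp_projY _ (fun y => ((hψ i j).differentiable (by simp) y).const_mul _)]
    rcases d with a | a | a
    · rfl
    · exact pd_const_mul _ _ ((hψ i j).differentiable (by simp)) _ _
    · rfl
  all_goals
    rcases d with a | a | a <;>
      simp [gPsi, pd, fderiv_const]

end StmtNineAux2
section StmtNineAux3

variable {k l : ℕ} (ψ : (Fin l → ℝ) → Matrix (Fin k) (Fin k) ℝ)
  (C Cinv : Matrix (Fin l) (Fin l) ℝ)

lemma gPsi_mul_GinvM (hC : C * Cinv = 1) (p : (Fin k ⊕ (Fin l ⊕ Fin k)) → ℝ) :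
    gPsi k l ψ C p * GinvM ψ Cinv p = 1 := by
  ext a b
  rw [Matrix.mul_apply]
  have hCC : ∀ a b : Fin l, ∑ c, C a c * Cinv c b = if a = b then 1 else 0 := by
    intro a b
    have := congrFun (congrFun hC a) b
    simpa [Matrix.mul_apply, Matrix.one_apply] using this
  rcases a with a | a | a <;> rcases b with b | b | b <;>
    simp [Fintype.sum_sum_type, gPsi, GinvM, Matrix.one_apply, hCC, Finset.sum_ite_eq,
      Finset.sum_ite_eq', mul_comm, projY_def]
end StmtNineAux3
section StmtNineAux4

variable {k l : ℕ} (ψ : (Fin l → ℝ) → Matrix (Fin k) (Fin k) ℝ)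
  (C Cinv : Matrix (Fin l) (Fin l) ℝ)

lemma christoffel_eq (hψ : ∀ i j, ContDiff ℝ (⊤ : ℕ∞) (fun y => ψ y i j))
    (c i j : Fin k ⊕ (Fin l ⊕ Fin k)) (p : (Fin k ⊕ (Fin l ⊕ Fin k)) → ℝ) :
    christoffel (gPsi k l ψ C) (GinvM ψ Cinv) c i j p = ΓE ψ Cinv c i j (projY k l p) := by
  unfold christoffel
  simp only [pd_gPsi ψ C hψ]
  rcases c with c | c | c <;> rcases i with i | i | i <;> rcases j with j | j | j <;>
    simp [Fintype.sum_sum_type, GinvM, ΓE, Finset.mul_sum, Finset.sum_ite_eq,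
      Finset.sum_ite_eq'] <;>
    first
      | (apply Finset.sum_congr rfl; intro x _; ring)
      | ring

end StmtNineAux4
section StmtNineAux5

variable {k l : ℕ} (ψ : (Fin l → ℝ) → Matrix (Fin k) (Fin k) ℝ)
  (C Cinv : Matrix (Fin l) (Fin l) ℝ)

lemma pd_christoffel (hψ : ∀ i j, ContDiff ℝ (⊤ : ℕ∞) (fun y => ψ y i j))
    (d c i j : Fin k ⊕ (Fin l ⊕ Fin k)) (p : (Fin k ⊕ (Fin l ⊕ Fin k)) → ℝ) :
    pd d (christoffel (gPsi k l ψ C) (GinvM ψ Cinv) c i j) p = match d with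
      | .inr (.inl a) => pd a (ΓE ψ Cinv c i j) (projY k l p)
      | _ => 0 := by
  have h : christoffel (gPsi k l ψ C) (GinvM ψ Cinv) c i j
      = fun q => ΓE ψ Cinv c i j (projY k l q) :=
    funext (christoffel_eq ψ C Cinv hψ c i j)
  rw [h, pd_comp_projY _ ((contDiff_ΓE ψ Cinv hψ c i j).differentiable (by simp))]

lemma pd_ΓE (hψ : ∀ i j, ContDiff ℝ (⊤ : ℕ∞) (fun y => ψ y i j))
    (a : Fin l) (c i j : Fin k ⊕ (Fin l ⊕ Fin k)) (y : Fin l → ℝ) :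
    pd a (ΓE ψ Cinv c i j) y = match c, i, j with
      | .inr (.inl b), .inl i', .inl j' =>
          ∑ e, Cinv b e * pd a (pd e (fun z => ψ z i' j')) y
      | .inr (.inr m), .inl i', .inr (.inl e) => -(pd a (pd e (fun z => ψ z i' m)) y)
      | .inr (.inr m), .inr (.inl e), .inl i' => -(pd a (pd e (fun z => ψ z i' m)) y)
      | _, _, _ => 0 := by
  rcases c with c | c | c <;> rcases i with i | i | i <;> rcases j with j | j | j <;>
    simp only [ΓE] <;>
    first
      | exact pd_const 0 _ _
      | exact pd_neg _ _ _
      | skip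
  · -- the sum case
    rw [pd_sum _ _ (fun e => (((contDiff_pdψ ψ hψ e i j : ContDiff ℝ (⊤ : ℕ∞) _)).differentiable
        (by simp)).const_mul _) a y]
    exact Finset.sum_congr rfl fun e _ =>
      pd_const_mul _ _ ((contDiff_pdψ ψ hψ e i j).differentiable (by simp)) a y

end StmtNineAux5
section StmtNineAux6

variable {k l : ℕ} (ψ : (Fin l → ℝ) → Matrix (Fin k) (Fin k) ℝ)
  (C Cinv : Matrix (Fin l) (Fin l) ℝ)

lemma ricci_eq (hψ : ∀ i j, ContDiff ℝ (⊤ : ℕ∞) (fun y => ψ y i j))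
    (i j : Fin k ⊕ (Fin l ⊕ Fin k)) (p : (Fin k ⊕ (Fin l ⊕ Fin k)) → ℝ) :
    ricci (gPsi k l ψ C) (GinvM ψ Cinv) i j p = match i, j with
      | .inl i', .inl j' =>
          ∑ b, ∑ a, Cinv b a * pd b (pd a (fun z => ψ z i' j')) (projY k l p)
      | _, _ => 0 := by
  unfold ricci curvOp
  simp only [pd_christoffel ψ C Cinv hψ, christoffel_eq ψ C Cinv hψ,
    pd_ΓE ψ Cinv hψ]
  rcases i with i | i | i <;> rcases j with j | j | j <;>
    simp [Fintype.sum_sum_type, ΓE, pd_const]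

end StmtNineAux6
section StmtNineAux7

variable {k l : ℕ} (ψ : (Fin l → ℝ) → Matrix (Fin k) (Fin k) ℝ)
  (C Cinv : Matrix (Fin l) (Fin l) ℝ)

lemma ricciOp_eq (hψ : ∀ i j, ContDiff ℝ (⊤ : ℕ∞) (fun y => ψ y i j))
    (i j : Fin k ⊕ (Fin l ⊕ Fin k)) (p : (Fin k ⊕ (Fin l ⊕ Fin k)) → ℝ) :
    ricciOp (gPsi k l ψ C) (GinvM ψ Cinv) p i j = match i, j with
      | .inr (.inr m), .inl i' =>
          ∑ b, ∑ a, Cinv b a * pd b (pd a (fun z => ψ z m i')) (projY k l p)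
      | _, _ => 0 := by
  unfold ricciOp
  simp only [ricci_eq ψ C Cinv hψ]
  rcases i with i | i | i <;> rcases j with j | j | j <;>
    simp [Fintype.sum_sum_type, GinvM, Finset.sum_ite_eq, Finset.sum_ite_eq']

end StmtNineAux7
section StmtNineAux8

variable {k l : ℕ} (ψ : (Fin l → ℝ) → Matrix (Fin k) (Fin k) ℝ)

lemma pd_pd_comp (hψ : ∀ i j, ContDiff ℝ (⊤ : ℕ∞) (fun y => ψ y i j))
    (a c : Fin l) (i m : Fin k) (p : (Fin k ⊕ (Fin l ⊕ Fin k)) → ℝ) :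
    pd (.inr (.inl a)) (pd (.inr (.inl c)) (fun q => ψ (fun e => q (.inr (.inl e))) i m)) p
      = pd a (pd c (fun z => ψ z i m)) (projY k l p) := by
  have h1 : (pd (.inr (.inl c)) (fun q => ψ (fun e => q (.inr (.inl e))) i m) :
      ((Fin k ⊕ (Fin l ⊕ Fin k)) → ℝ) → ℝ)
      = fun q => pd c (fun z => ψ z i m) (projY k l q) := by
    funext q
    have h2 : (fun q' : (Fin k ⊕ (Fin l ⊕ Fin k)) → ℝ => ψ (fun e => q' (.inr (.inl e))) i m)
        = fun q' => (fun z => ψ z i m) (projY k l q') := rfl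
    rw [h2, pd_comp_projY _ ((hψ i m).differentiable (by simp))]
  rw [h1]
  exact pd_comp_projY (k := k) (pd c (fun z => ψ z i m))
    ((contDiff_pdψ ψ hψ c i m).differentiable (by simp)) (.inr (.inl a)) p

end StmtNineAux8

/-- For the metric `gPsi`, the Ricci operator satisfies
`rho(∂xᵢ) = C^{ac} δ^{jk} ψ_{ij/ac} ∂x̄ₖ`, `rho(∂yₐ) = 0`, `rho(∂x̄ᵢ) = 0`;
in particular `rho² = 0`. -/
theorem stmt_9 (k l : ℕ) (hk : 1 ≤ k) (hl : 1 ≤ l)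
    (ψ : (Fin l → ℝ) → Matrix (Fin k) (Fin k) ℝ)
    (hψsmooth : ∀ i j, ContDiff ℝ (⊤ : ℕ∞) (fun y => ψ y i j))
    (hψsymm : ∀ y i j, ψ y i j = ψ y j i)
    (C Cinv : Matrix (Fin l) (Fin l) ℝ) (hCsymm : C.IsSymm)
    (hC : C * Cinv = 1) (hC' : Cinv * C = 1)
    (ginv : ((Fin k ⊕ (Fin l ⊕ Fin k)) → ℝ) →
      Matrix (Fin k ⊕ (Fin l ⊕ Fin k)) (Fin k ⊕ (Fin l ⊕ Fin k)) ℝ)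
    (hginv : ∀ p, gPsi k l ψ C p * ginv p = 1 ∧ ginv p * gPsi k l ψ C p = 1) :
    ∀ p : (Fin k ⊕ (Fin l ⊕ Fin k)) → ℝ,
      (∀ i m : Fin k,
        ricciOp (gPsi k l ψ C) ginv p (.inr (.inr m)) (.inl i) =
          ∑ a, ∑ c, Cinv a c *
            pd (.inr (.inl a))
              (pd (.inr (.inl c)) (fun q => ψ (fun e => q (.inr (.inl e))) i m)) p) ∧
      (∀ (i j : Fin k), ricciOp (gPsi k l ψ C) ginv p (.inl j) (.inl i) = 0) ∧
      (∀ (i : Fin k) (a : Fin l),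
        ricciOp (gPsi k l ψ C) ginv p (.inr (.inl a)) (.inl i) = 0) ∧
      (∀ (a : Fin l) (idx : Fin k ⊕ (Fin l ⊕ Fin k)),
        ricciOp (gPsi k l ψ C) ginv p idx (.inr (.inl a)) = 0) ∧
      (∀ (i : Fin k) (idx : Fin k ⊕ (Fin l ⊕ Fin k)),
        ricciOp (gPsi k l ψ C) ginv p idx (.inr (.inr i)) = 0) ∧
      ricciOp (gPsi k l ψ C) ginv p * ricciOp (gPsi k l ψ C) ginv p = 0 := by
  have hgeq : ginv = GinvM ψ Cinv := by
    funext p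
    have h1 := (hginv p).2
    have h2 := gPsi_mul_GinvM ψ C Cinv hC p
    calc ginv p = ginv p * (gPsi k l ψ C p * GinvM ψ Cinv p) := by rw [h2, mul_one]
      _ = (ginv p * gPsi k l ψ C p) * GinvM ψ Cinv p := by rw [mul_assoc]
      _ = GinvM ψ Cinv p := by rw [h1, one_mul]
  subst hgeq
  intro p
  refine ⟨?_, ?_, ?_, ?_, ?_, ?_⟩
  · intro i m
    simp only [ricciOp_eq ψ C Cinv hψsmooth, pd_pd_comp ψ hψsmooth]
    have hsym : (fun z => ψ z m i) = fun z => ψ z i m := funext fun z => hψsymm z m i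
    rw [hsym]
  · intro i j; simp only [ricciOp_eq ψ C Cinv hψsmooth]
  · intro i a; simp only [ricciOp_eq ψ C Cinv hψsmooth]
  · intro a idx
    rcases idx with i | i | i <;> simp only [ricciOp_eq ψ C Cinv hψsmooth]
  · intro i idx
    rcases idx with j | j | j <;> simp only [ricciOp_eq ψ C Cinv hψsmooth]
  · ext i j
    rw [Matrix.mul_apply]
    simp only [ricciOp_eq ψ C Cinv hψsmooth]
    rcases i with i | i | i <;> rcases j with j | j | j <;>
      simp [Fintype.sum_sum_type]
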